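/- arXiv:math/0110095 — 4 statements merged into one kernel-verified Lean document; each statement's English description precedes it below -/
import Mathlib

section
/- Let Γ be a topological abelian group, n ≥ 2, and ω₁,…,ωₙ ∈ Γ. For a word μ = (i₁,…,i_k) with letters in {1,…,n}, write ω_μ = ω_{i₁} + ⋯ + ω_{i_k}. If −ω_i does not lie in the closure of the set {ω_μ : μ a nonempty word} for every i ∈ {1,…,n}, and U ⊆ Γ is a subset with Ū − Ū compact, then there exists K ∈ ℕ such that for every word μ with |μ| > K, the sets U − ω_μ and U are disjoint. -/
/-!
If the claim fails, there are words `μₖ` of length `> k` with `ω_{μₖ} ∈ U - U ⊆ Ū - Ū`.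
By Dickson's lemma applied to the letter counts we may pass to a subsequence in which every
`μₖ` is a sub-multiset of all later ones, and by compactness of `Ū - Ū` some `ω_{μₗ} - ω_{μₖ}`
with `|μₗ| ≥ |μₖ| + 2` lies in any prescribed neighbourhood of `0`. This difference is `ω_β`
for the complementary word `β`. But `N = ⋂ᵢ {x | x - ωᵢ ∉ closure S}`, `S` the set of sums of
nonempty words, is a neighbourhood of `0` by hypothesis, and it contains no `ω_β` with
`|β| ≥ 2`: stripping the first letter `i` of `β` leaves `ω_β - ωᵢ ∈ S`.
-/

open Pointwise Filter Topology

namespace List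

theorem Subperm.exists_sum_map_eq_sub {α M : Type*} [AddCommGroup M] (f : α → M)
    {l₁ l₂ : List α} (h : l₁ <+~ l₂) :
    ∃ l : List α, l.length = l₂.length - l₁.length ∧
      (l.map f).sum = (l₂.map f).sum - (l₁.map f).sum := by
  obtain ⟨l₁', hperm, hsub⟩ := h
  obtain ⟨l, hl⟩ := hsub.exists_perm_append
  have happ : l₂ ~ l₁ ++ l := hl.trans (hperm.append_right l)
  refine ⟨l, ?_, ?_⟩
  · rw [happ.length_eq, length_append]
    omega
  · rw [(happ.map f).sum_eq, map_append, sum_append, add_sub_cancel_left]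

theorem exists_subseq_forall_subperm {α : Type*} [Finite α] [DecidableEq α] (w : ℕ → List α) :
    ∃ g : ℕ ↪o ℕ, ∀ ⦃k l⦄, k ≤ l → w (g k) <+~ w (g l) := by
  obtain ⟨g, hg⟩ := (Set.isPWO_of_wellQuasiOrderedLE (Set.univ : Set (α → ℕ)))
    |>.exists_monotone_subseq (f := fun k a => (w k).count a) (fun _ => Set.mem_univ _)
  exact ⟨g, fun k l hkl => subperm_iff_count.mpr (hg hkl)⟩

end List

theorem IsCompact.exists_frequently_sub_mem {G : Type*} [AddGroup G] [TopologicalSpace G]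
    [IsTopologicalAddGroup G] {K : Set G} (hK : IsCompact K) {u : ℕ → G} (hu : ∀ k, u k ∈ K)
    {N : Set G} (hN : N ∈ 𝓝 0) : ∃ k, ∃ᶠ l in atTop, u l - u k ∈ N := by
  obtain ⟨x, -, hx⟩ := hK.exists_mapClusterPt (f := atTop) (tendsto_principal.mpr (.of_forall hu))
  have hsub : ∀ᶠ p in 𝓝 x ×ˢ 𝓝 x, p.1 - p.2 ∈ N := by
    rw [← nhds_prod_eq]
    exact continuous_sub.continuousAt.preimage_mem_nhds (by rwa [sub_self])
  obtain ⟨V, hV, hVV⟩ := mem_prod_self_iff.mp hsub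
  have hfreq : ∃ᶠ l in atTop, u l ∈ V := mapClusterPt_iff_frequently.mp hx V hV
  obtain ⟨k, -, hk⟩ := frequently_atTop.mp hfreq 0
  exact ⟨k, hfreq.mono fun l hl => hVV (Set.mk_mem_prod hl hk)⟩

theorem exists_mem_nhds_zero_forall_sum_notMem {Γ α : Type*} [AddCommGroup Γ]
    [TopologicalSpace Γ] [IsTopologicalAddGroup Γ] [Finite α] (ω : α → Γ)
    (hω : ∀ i, -ω i ∉ closure {γ : Γ | ∃ μ : List α, μ ≠ [] ∧ (μ.map ω).sum = γ}) :
    ∃ N ∈ 𝓝 (0 : Γ), ∀ β : List α, 2 ≤ β.length → (β.map ω).sum ∉ N := by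
  set S := {γ : Γ | ∃ μ : List α, μ ≠ [] ∧ (μ.map ω).sum = γ}
  refine ⟨⋂ i, (· - ω i) ⁻¹' (closure S)ᶜ, iInter_mem.mpr fun i => ?_, ?_⟩
  · exact (continuous_sub_right (ω i)).continuousAt.preimage_mem_nhds
      (isClosed_closure.isOpen_compl.mem_nhds (by simpa using hω i))
  · rintro (_ | ⟨i, β⟩) hlen hmem
    · simp at hlen
    · refine Set.mem_iInter.mp hmem i (subset_closure ⟨β, ?_, ?_⟩)
      · rintro rfl
        simp at hlen
      · simp

theorem stmt0_general {Γ : Type*} [AddCommGroup Γ] [TopologicalSpace Γ] [IsTopologicalAddGroup Γ]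
    (n : ℕ) (ω : Fin n → Γ)
    (hω : ∀ i : Fin n,
      -ω i ∉ closure {γ : Γ | ∃ μ : List (Fin n), μ ≠ [] ∧ (μ.map ω).sum = γ})
    (U : Set Γ) (hU : IsCompact (closure U - closure U)) :
    ∃ K : ℕ, ∀ μ : List (Fin n), μ.length > K →
      Disjoint ((fun γ => γ - (μ.map ω).sum) '' U) U := by
  by_contra! hfar
  choose w hlen hmeet using hfar
  have hw : ∀ k, ((w k).map ω).sum ∈ closure U - closure U := fun k => by
    obtain ⟨_, ⟨u, hu, rfl⟩, hu'⟩ := Set.not_disjoint_iff.mp (hmeet k)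
    exact ⟨u, subset_closure hu, _, subset_closure hu', sub_sub_cancel u _⟩
  obtain ⟨N, hN0, hN⟩ := exists_mem_nhds_zero_forall_sum_notMem ω hω
  obtain ⟨g, hg⟩ := List.exists_subseq_forall_subperm w
  obtain ⟨k, hk⟩ := hU.exists_frequently_sub_mem (fun k => hw (g k)) hN0
  obtain ⟨l, hl, hlN⟩ := frequently_atTop.mp hk ((w (g k)).length + 2)
  have hgk : k ≤ g k := g.strictMono.le_apply
  have hgl : l ≤ g l := g.strictMono.le_apply
  have hlenk := hlen (g k)
  have hlenl := hlen (g l)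
  obtain ⟨β, hβlen, hβsum⟩ := (hg (by omega : k ≤ l)).exists_sum_map_eq_sub ω
  exact hN β (by omega) (hβsum ▸ hlN)

theorem stmt0 {Γ : Type*} [AddCommGroup Γ] [TopologicalSpace Γ] [IsTopologicalAddGroup Γ]
    [T2Space Γ] (n : ℕ) (hn : 2 ≤ n) (ω : Fin n → Γ)
    (hω : ∀ i : Fin n,
      -ω i ∉ closure {γ : Γ | ∃ μ : List (Fin n), μ ≠ [] ∧ (μ.map ω).sum = γ})
    (U : Set Γ) (hU : IsCompact (closure U - closure U)) :
    ∃ K : ℕ, ∀ μ : List (Fin n), μ.length > K →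
      Disjoint ((fun γ => γ - (μ.map ω).sum) '' U) U :=
  stmt0_general n ω hω U hU
end

section
/- Let B be a unital C*-algebra, S₁,…,Sₙ ∈ B isometries with Σ_{i=1}^n S_i S_i* = 1 (Cuntz relations), and let p ∈ B be a projection commuting with all S_μ p' S_μ* for projections p' in a fixed commutative subalgebra containing p. Suppose there is K ∈ ℕ with p S_μ p = 0 for all words μ with |μ| > K. Define ρ_k(x) = Σ_{|μ|=k} S_μ x S_μ* and q = (∏_{k=1}^K (1 − ρ_k(p))) p. Then for every nonempty word μ, q S_μ q = 0; consequently, the projections S_μ q S_μ* and S_ν q S_ν* are orthogonal whenever μ ≠ ν. -/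
/-!
Write `q = X p` with `X = ∏ₖ (1 - ρₖ(p))`; all the factors commute with each other and with `p`,
so `q` is a self-adjoint element with `q = p X`. For a word `μ` of length `k`, `ρₖ(p)` fixes
`S_μ p` (the other summands vanish because `S_ν* S_μ = 0` for distinct words of equal length),
so `(1 - ρₖ(p)) S_μ p = 0`. Hence `q S_μ q = p X S_μ p X = 0` when `1 ≤ |μ| ≤ K`, while for
`|μ| > K` already `p S_μ p = 0`. Orthogonality of the `S_μ q S_μ*` follows: if `ν = μτ` then
`S_μ* S_ν = S_τ` and the product contains `q S_τ q`; the case `μ = ντ` is its adjoint, and for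
incomparable words `S_μ* S_ν = 0`.
-/

section

variable {R B ι : Type*}

theorem List.prod_mul_eq_zero_of_mem [MonoidWithZero R] {l : List R} {a b : R}
    (hl : l.Pairwise Commute) (ha : a ∈ l) (hab : a * b = 0) : l.prod * b = 0 := by
  induction l with
  | nil => simp at ha
  | cons x l ih =>
    rw [List.pairwise_cons] at hl
    rw [List.prod_cons, mul_assoc]
    rcases List.mem_cons.1 ha with rfl | ha
    · rw [← mul_assoc, (Commute.list_prod_right _ _ hl.1).eq, mul_assoc, hab, mul_zero]
    · rw [ih hl.2 ha, mul_zero]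

theorem IsSelfAdjoint.list_prod [Monoid R] [StarMul R] {l : List R}
    (hsa : ∀ x ∈ l, IsSelfAdjoint x) (hl : l.Pairwise Commute) : IsSelfAdjoint l.prod := by
  induction l with
  | nil => exact .one R
  | cons x l ih =>
    rw [List.pairwise_cons] at hl
    have hx : IsSelfAdjoint x := hsa x List.mem_cons_self
    have hl' := ih (fun y hy => hsa y (List.mem_cons_of_mem _ hy)) hl.2
    exact (hx.commute_iff hl').1 (Commute.list_prod_right _ _ hl.1)

def wordProd [Monoid B] (S : ι → B) (μ : List ι) : B := (μ.map S).prod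

@[simp]
theorem wordProd_nil [Monoid B] (S : ι → B) : wordProd S [] = 1 := rfl

@[simp]
theorem wordProd_cons [Monoid B] (S : ι → B) (i : ι) (μ : List ι) :
    wordProd S (i :: μ) = S i * wordProd S μ := by
  simp [wordProd]

def ConjugatesCommute [Semiring B] [StarRing B] (S : ι → B) (p : B) : Prop :=
  ∀ μ ν : List ι,
    Commute (wordProd S μ * p * star (wordProd S μ)) (wordProd S ν * p * star (wordProd S ν))

section Shift

variable [Fintype ι] {S : ι → B} {p : B}

-- `ρₖ(x)`
def canonicalShift [Semiring B] [StarRing B] (S : ι → B) (k : ℕ) (x : B) : B :=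
  ∑ μ : Fin k → ι, wordProd S (List.ofFn μ) * x * star (wordProd S (List.ofFn μ))

@[simp]
theorem canonicalShift_zero [Semiring B] [StarRing B] (S : ι → B) (x : B) :
    canonicalShift S 0 x = x := by
  simp [canonicalShift]

theorem IsSelfAdjoint.canonicalShift [Semiring B] [StarRing B] {x : B} (hx : IsSelfAdjoint x)
    (k : ℕ) : IsSelfAdjoint (canonicalShift S k x) :=
  isSelfAdjoint_sum _ fun _ _ => hx.conjugate _

theorem commute_canonicalShift [Semiring B] [StarRing B] (hcomm : ConjugatesCommute S p)
    (j k : ℕ) : Commute (canonicalShift S j p) (canonicalShift S k p) :=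
  .sum_left _ _ _ fun _ _ => .sum_right _ _ _ fun _ _ => hcomm _ _

def shiftComplements [Ring B] [StarRing B] (S : ι → B) (K : ℕ) (p : B) : List B :=
  (List.range K).map fun k => 1 - canonicalShift S (k + 1) p

-- `q`
def wanderingPart [Ring B] [StarRing B] (S : ι → B) (K : ℕ) (p : B) : B :=
  (shiftComplements S K p).prod * p

variable [Ring B] [StarRing B] {K : ℕ}

theorem commute_of_mem_shiftComplements (hcomm : ConjugatesCommute S p) {x : B} (hx : x ∈ shiftComplements S K p) (j : ℕ) : Commute (canonicalShift S j p) x := by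
  obtain ⟨k, -, rfl⟩ := List.mem_map.1 hx
  exact (Commute.one_right _).sub_right (commute_canonicalShift hcomm j (k + 1))

theorem pairwise_commute_shiftComplements (hcomm : ConjugatesCommute S p) :
    (shiftComplements S K p).Pairwise Commute := by
  refine List.pairwise_of_forall_mem_list fun x hx y hy => ?_
  obtain ⟨k, -, rfl⟩ := List.mem_map.1 hx
  exact (Commute.one_left _).sub_left (commute_of_mem_shiftComplements hcomm hy (k + 1))

theorem commute_prod_shiftComplements (hcomm : ConjugatesCommute S p) :
    Commute p (shiftComplements S K p).prod :=
  -- `p = ρ₀(p)`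
  Commute.list_prod_right _ _ fun _ hx => by
    simpa using commute_of_mem_shiftComplements hcomm hx 0

theorem isSelfAdjoint_wanderingPart (hp : IsSelfAdjoint p) (hcomm : ConjugatesCommute S p) :
    IsSelfAdjoint (wanderingPart S K p) := by
  have hX : IsSelfAdjoint (shiftComplements S K p).prod := by
    refine IsSelfAdjoint.list_prod (fun x hx => ?_) (pairwise_commute_shiftComplements hcomm)
    obtain ⟨k, -, rfl⟩ := List.mem_map.1 hx
    exact (IsSelfAdjoint.one B).sub (hp.canonicalShift (k + 1))
  exact (hX.commute_iff hp).1 (commute_prod_shiftComplements hcomm).symm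

end Shift

def OrthogonalIsometries [Semiring B] [Star B] [DecidableEq ι] (S : ι → B) : Prop :=
  ∀ i j, star (S i) * S j = if i = j then 1 else 0

namespace OrthogonalIsometries

section Words

variable [Semiring B] [StarRing B] [DecidableEq ι] {S : ι → B}

theorem star_mul_self (hS : OrthogonalIsometries S) (i : ι) : star (S i) * S i = 1 := by
  simpa using hS i i

theorem star_wordProd_mul_wordProd_append (hS : OrthogonalIsometries S) (μ τ : List ι) :
    star (wordProd S μ) * wordProd S (μ ++ τ) = wordProd S τ := by
  induction μ with
  | nil => simp
  | cons i μ ih =>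
    rw [List.cons_append, wordProd_cons, wordProd_cons, star_mul, mul_assoc,
      ← mul_assoc (star (S i)), hS.star_mul_self, one_mul, ih]

theorem star_wordProd_mul_self (hS : OrthogonalIsometries S) (μ : List ι) :
    star (wordProd S μ) * wordProd S μ = 1 := by
  simpa using hS.star_wordProd_mul_wordProd_append μ []

theorem star_wordProd_mul_wordProd_eq_zero (hS : OrthogonalIsometries S) {μ ν : List ι}
    (h : ¬μ <+: ν) (h' : ¬ν <+: μ) : star (wordProd S μ) * wordProd S ν = 0 := by
  induction μ generalizing ν with
  | nil => exact absurd ν.nil_prefix h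
  | cons i μ ih =>
    cases ν with
    | nil => exact absurd (i :: μ).nil_prefix h'
    | cons j ν =>
      rw [wordProd_cons, wordProd_cons, star_mul, mul_assoc, ← mul_assoc (star (S i)), hS i j]
      split_ifs with hij
      · subst hij
        rw [one_mul]
        exact ih (fun hp => h (List.cons_prefix_cons.2 ⟨rfl, hp⟩))
          (fun hp => h' (List.cons_prefix_cons.2 ⟨rfl, hp⟩))
      · simp

theorem star_wordProd_mul_wordProd_of_length_eq (hS : OrthogonalIsometries S) {μ ν : List ι}
    (hlen : μ.length = ν.length) (hne : μ ≠ ν) : star (wordProd S μ) * wordProd S ν = 0 :=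
  hS.star_wordProd_mul_wordProd_eq_zero (fun h => hne (h.eq_of_length hlen))
    (fun h => hne (h.eq_of_length hlen.symm).symm)

theorem conj_mul_conj_eq_zero (hS : OrthogonalIsometries S) {q : B} (hq : IsSelfAdjoint q)
    (hqS : ∀ μ, μ ≠ [] → q * wordProd S μ * q = 0) {μ ν : List ι} (hne : μ ≠ ν) :
    (wordProd S μ * q * star (wordProd S μ)) * (wordProd S ν * q * star (wordProd S ν)) = 0 := by
  have reassoc : ∀ μ ν : List ι,
      (wordProd S μ * q * star (wordProd S μ)) * (wordProd S ν * q * star (wordProd S ν)) =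
        wordProd S μ * (q * (star (wordProd S μ) * wordProd S ν) * q) *
          star (wordProd S ν) := by
    intro μ ν
    simp only [mul_assoc]
  have of_append : ∀ μ τ : List ι, τ ≠ [] →
      (wordProd S μ * q * star (wordProd S μ)) *
        (wordProd S (μ ++ τ) * q * star (wordProd S (μ ++ τ))) = 0 := by
    intro μ τ hτ
    rw [reassoc, hS.star_wordProd_mul_wordProd_append, hqS τ hτ, mul_zero, zero_mul]
  by_cases h : μ <+: ν
  · obtain ⟨τ, rfl⟩ := h
    exact of_append μ τ (by rintro rfl; simp at hne)
  by_cases h' : ν <+: μ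
  · obtain ⟨τ, rfl⟩ := h'
    have := congrArg star (of_append ν τ (by rintro rfl; simp at hne))
    rwa [star_mul, (hq.conjugate _).star_eq, (hq.conjugate _).star_eq, star_zero] at this
  rw [reassoc, hS.star_wordProd_mul_wordProd_eq_zero h h', mul_zero, zero_mul, mul_zero, zero_mul]

theorem canonicalShift_length_mul [Fintype ι] {p : B} (hS : OrthogonalIsometries S)
    (hp : IsIdempotentElem p) (μ : List ι) : canonicalShift S μ.length p * (wordProd S μ * p) = wordProd S μ * p := by
  rw [canonicalShift, Finset.sum_mul, Fintype.sum_eq_single μ.get]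
  · rw [List.ofFn_get]
    simp only [mul_assoc]
    rw [← mul_assoc (star _), hS.star_wordProd_mul_self, one_mul, hp.eq]
  · intro ν hν
    have hne : List.ofFn ν ≠ μ := fun h => hν (List.ofFn_injective (h.trans μ.ofFn_get.symm))
    simp only [mul_assoc]
    rw [← mul_assoc (star _), hS.star_wordProd_mul_wordProd_of_length_eq (by simp) hne,
      zero_mul, mul_zero, mul_zero]

end Words

section Shift

variable [Ring B] [StarRing B] [DecidableEq ι] [Fintype ι] {S : ι → B} {p : B} {K : ℕ}

theorem prod_shiftComplements_mul_wordProd_mul (hS : OrthogonalIsometries S)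
    (hp : IsIdempotentElem p) (hcomm : ConjugatesCommute S p) {μ : List ι} (hμ : μ ≠ [])
    (hμK : μ.length ≤ K) :
    (shiftComplements S K p).prod * (wordProd S μ * p) = 0 := by
  have hlen : 0 < μ.length := List.length_pos_iff.2 hμ
  refine List.prod_mul_eq_zero_of_mem (pairwise_commute_shiftComplements hcomm)
    (a := 1 - canonicalShift S μ.length p) ?_ ?_
  · exact List.mem_map.2
      ⟨μ.length - 1, List.mem_range.2 (by omega), by rw [Nat.sub_add_cancel hlen]⟩
  · rw [sub_mul, one_mul, hS.canonicalShift_length_mul hp, sub_self]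

theorem wanderingPart_mul_wordProd_mul_self (hS : OrthogonalIsometries S)
    (hp : IsIdempotentElem p) (hcomm : ConjugatesCommute S p)
    (hK : ∀ μ : List ι, K < μ.length → p * wordProd S μ * p = 0) {μ : List ι} (hμ : μ ≠ []) :
    wanderingPart S K p * wordProd S μ * wanderingPart S K p = 0 := by
  set X := (shiftComplements S K p).prod
  have hXp : X * p = p * X := (commute_prod_shiftComplements hcomm).eq.symm
  rw [wanderingPart]
  by_cases hμK : μ.length ≤ K
  · calc X * p * wordProd S μ * (X * p) = p * (X * (wordProd S μ * p)) * X := by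
          rw [hXp]; simp only [mul_assoc]
      _ = 0 := by
        rw [hS.prod_shiftComplements_mul_wordProd_mul hp hcomm hμ hμK, mul_zero, zero_mul]
  · calc X * p * wordProd S μ * (X * p) = X * (p * wordProd S μ * p) * X := by
          nth_rw 2 [hXp]; simp only [mul_assoc]
      _ = 0 := by rw [hK μ (by omega), mul_zero, zero_mul]

end Shift

end OrthogonalIsometries

end

theorem stmt8_general {B : Type*} [NormedRing B] [StarRing B]
    (n : ℕ)
    (S : Fin n → B) (hiso : ∀ i j, star (S i) * S j = if i = j then 1 else 0)
    (Sw : List (Fin n) → B) (hSw : ∀ μ, Sw μ = (μ.map S).prod)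
    (p : B) (hp : IsSelfAdjoint p ∧ p * p = p)
    (hcomm : ∀ μ ν : List (Fin n),
      Commute (Sw μ * p * star (Sw μ)) (Sw ν * p * star (Sw ν)))
    (K : ℕ) (hK : ∀ μ : List (Fin n), μ.length > K → p * Sw μ * p = 0)
    (ρ : ℕ → B)
    (hρ : ∀ k, ρ k = ∑ μ : Fin k → Fin n,
      Sw (List.ofFn μ) * p * star (Sw (List.ofFn μ)))
    (q : B)
    (hq : q = (((List.range K).map (fun k => 1 - ρ (k + 1))).prod) * p) :
    (∀ μ : List (Fin n), μ ≠ [] → q * Sw μ * q = 0) ∧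
    (∀ μ ν : List (Fin n), μ ≠ ν →
      (Sw μ * q * star (Sw μ)) * (Sw ν * q * star (Sw ν)) = 0) := by
  have hS : OrthogonalIsometries S := hiso
  obtain rfl : Sw = wordProd S := funext hSw
  obtain rfl : ρ = fun k => canonicalShift S k p := funext hρ
  obtain rfl : q = wanderingPart S K p := hq
  have hqS : ∀ μ, μ ≠ [] → wanderingPart S K p * wordProd S μ * wanderingPart S K p = 0 :=
    fun μ hμ => hS.wanderingPart_mul_wordProd_mul_self hp.2 hcomm hK hμ
  exact ⟨hqS, fun μ ν hne =>
    hS.conj_mul_conj_eq_zero (isSelfAdjoint_wanderingPart hp.1 hcomm) hqS hne⟩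

theorem stmt8 {B : Type*} [NormedRing B] [StarRing B] [CStarRing B]
    [NormedAlgebra ℂ B] [StarModule ℂ B] [CompleteSpace B]
    (n : ℕ) (hn : 2 ≤ n)
    (S : Fin n → B) (hiso : ∀ i j, star (S i) * S j = if i = j then 1 else 0)
    (hcuntz : ∑ i, S i * star (S i) = 1)
    (Sw : List (Fin n) → B) (hSw : ∀ μ, Sw μ = (μ.map S).prod)
    (p : B) (hp : IsSelfAdjoint p ∧ p * p = p)
    (hcomm : ∀ μ ν : List (Fin n),
      Commute (Sw μ * p * star (Sw μ)) (Sw ν * p * star (Sw ν)))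
    (K : ℕ) (hK : ∀ μ : List (Fin n), μ.length > K → p * Sw μ * p = 0)
    (ρ : ℕ → B)
    (hρ : ∀ k, ρ k = ∑ μ : Fin k → Fin n,
      Sw (List.ofFn μ) * p * star (Sw (List.ofFn μ)))
    (q : B)
    (hq : q = (((List.range K).map (fun k => 1 - ρ (k + 1))).prod) * p) :
    (∀ μ : List (Fin n), μ ≠ [] → q * Sw μ * q = 0) ∧
    (∀ μ ν : List (Fin n), μ ≠ ν →
      (Sw μ * q * star (Sw μ)) * (Sw ν * q * star (Sw ν)) = 0) :=
  stmt8_general n S hiso Sw hSw p hp hcomm K hK ρ hρ q hq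
end

section
/- In the setting of the previous lemma (Cuntz isometries S₁,…,Sₙ with Σ S_iS_i* = 1, projection p with pS_μp = 0 for |μ| > K, commuting family {S_μ p S_μ*}, ρ_k(x) = Σ_{|μ|=k} S_μ x S_μ*, and q = (∏_{k=1}^K (1 − ρ_k(p))) p): one has Σ_{μ, |μ| ≤ K} S_μ q S_μ* · p = p. -/
/-- Auxiliary: product of `(1 - ρ (l+k))` for `k < m`. -/
def cuntzProd {B : Type*} [Ring B] (ρ : ℕ → B) (l m : ℕ) : B :=
  ((List.range m).map (fun k => 1 - ρ (l + k))).prod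

lemma cuntzProd_zero {B : Type*} [Ring B] (ρ : ℕ → B) (l : ℕ) :
    cuntzProd ρ l 0 = 1 := by simp [cuntzProd]

lemma cuntzProd_succ_left {B : Type*} [Ring B] (ρ : ℕ → B) (l m : ℕ) :
    cuntzProd ρ l (m + 1) = (1 - ρ l) * cuntzProd ρ (l + 1) m := by
  have hfe : ((fun k => 1 - ρ (l + k)) ∘ Nat.succ) = (fun k => 1 - ρ (l + 1 + k)) := by
    funext k
    show 1 - ρ (l + (k + 1)) = 1 - ρ (l + 1 + k)
    rw [show l + (k + 1) = l + 1 + k from by omega]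
  simp only [cuntzProd, List.range_succ_eq_map, List.map_cons, List.map_map,
    List.prod_cons, Nat.add_zero, hfe]

lemma cuntzProd_add {B : Type*} [Ring B] (ρ : ℕ → B) (l m₁ m₂ : ℕ) :
    cuntzProd ρ l (m₁ + m₂) = cuntzProd ρ l m₁ * cuntzProd ρ (l + m₁) m₂ := by
  have hfe : ((fun k => 1 - ρ (l + k)) ∘ fun x => m₁ + x) = (fun k => 1 - ρ (l + m₁ + k)) := by
    funext k
    show 1 - ρ (l + (m₁ + k)) = 1 - ρ (l + m₁ + k)
    rw [Nat.add_assoc]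
  simp only [cuntzProd, List.range_add, List.map_append, List.prod_append, List.map_map, hfe]

theorem stmt9 {B : Type*} [NormedRing B] [StarRing B] [CStarRing B]
    [NormedAlgebra ℂ B] [StarModule ℂ B] [CompleteSpace B]
    (n : ℕ) (hn : 2 ≤ n)
    (S : Fin n → B) (hiso : ∀ i j, star (S i) * S j = if i = j then 1 else 0)
    (hcuntz : ∑ i, S i * star (S i) = 1)
    (Sw : List (Fin n) → B) (hSw : ∀ μ, Sw μ = (μ.map S).prod)
    (p : B) (hp : IsSelfAdjoint p ∧ p * p = p)
    (hcomm : ∀ μ ν : List (Fin n),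
      Commute (Sw μ * p * star (Sw μ)) (Sw ν * p * star (Sw ν)))
    (K : ℕ) (hK : ∀ μ : List (Fin n), μ.length > K → p * Sw μ * p = 0)
    (ρ : ℕ → B)
    (hρ : ∀ k, ρ k = ∑ μ : Fin k → Fin n,
      Sw (List.ofFn μ) * p * star (Sw (List.ofFn μ)))
    (q : B)
    (hq : q = (((List.range K).map (fun k => 1 - ρ (k + 1))).prod) * p) :
    (∑ l ∈ Finset.range (K + 1), ∑ μ : Fin l → Fin n,
      Sw (List.ofFn μ) * q * star (Sw (List.ofFn μ))) * p = p := by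
  obtain ⟨hpsa, hpp⟩ := hp
  have hSw_nil : Sw ([] : List (Fin n)) = 1 := by rw [hSw]; simp
  have hSw_cons : ∀ (i : Fin n) (w : List (Fin n)), Sw (i :: w) = S i * Sw w := by
    intro i w; rw [hSw, hSw]; simp
  -- p commutes with each S_μ p S_μ*
  have hcomm' : ∀ μ : List (Fin n), Commute (Sw μ * p * star (Sw μ)) p := by
    intro μ
    have h := hcomm μ []
    simpa [hSw_nil] using h
  have hcommρ : ∀ j, Commute p (ρ j) := by
    intro j
    rw [hρ]
    exact Commute.sum_right _ _ _ (fun μ _ => (hcomm' (List.ofFn μ)).symm)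
  -- ρ j * p = 0 for j > K
  have hρp0 : ∀ j, K < j → ρ j * p = 0 := by
    intro j hj
    rw [hρ, Finset.sum_mul]
    refine Finset.sum_eq_zero (fun μ _ => ?_)
    set w := List.ofFn μ with hw
    have hlen : w.length > K := by simp [hw, hj]
    have h1 : p * (Sw w * p * star (Sw w)) * p = 0 := by
      have he : p * (Sw w * p * star (Sw w)) * p
          = (p * Sw w * p) * (star (Sw w) * p) := by noncomm_ring
      rw [he, hK w hlen, zero_mul]
    calc (Sw w * p * star (Sw w)) * p
        = (Sw w * p * star (Sw w)) * p * p := by conv_rhs => rw [mul_assoc, hpp]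
      _ = p * (Sw w * p * star (Sw w)) * p := by rw [(hcomm' w).eq]
      _ = 0 := h1
  -- the "one-letter peeling" of sums over words
  have hsumsucc : ∀ (x : B) (m : ℕ),
      (∑ μ : Fin (m + 1) → Fin n, Sw (List.ofFn μ) * x * star (Sw (List.ofFn μ)))
        = ∑ i, S i * (∑ μ : Fin m → Fin n,
            Sw (List.ofFn μ) * x * star (Sw (List.ofFn μ))) * star (S i) := by
    intro x m
    rw [← Equiv.sum_comp (Fin.consEquiv (fun _ : Fin (m+1) => Fin n))
      (fun μ => Sw (List.ofFn μ) * x * star (Sw (List.ofFn μ))), Fintype.sum_prod_type]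
    refine Finset.sum_congr rfl (fun i _ => ?_)
    rw [Finset.mul_sum, Finset.sum_mul]
    refine Finset.sum_congr rfl (fun σ _ => ?_)
    have hofn : List.ofFn (Fin.consEquiv (fun _ : Fin (m+1) => Fin n) (i, σ))
        = i :: List.ofFn σ := by
      rw [List.ofFn_succ]
      simp [Fin.consEquiv]
    rw [hofn, hSw_cons, star_mul]
    noncomm_ring
  have hρsucc : ∀ m, ρ (m + 1) = ∑ i, S i * ρ m * star (S i) := by
    intro m
    rw [hρ (m + 1), hρ m]
    exact hsumsucc p m
  -- conj(ρ m * z) = ρ (m+1) * conj z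
  have hconjρ : ∀ (m : ℕ) (z : B),
      (∑ i, S i * (ρ m * z) * star (S i))
        = ρ (m + 1) * (∑ i, S i * z * star (S i)) := by
    intro m z
    rw [hρsucc m, Finset.sum_mul_sum, Finset.sum_comm]
    refine Eq.symm (Finset.sum_congr rfl (fun i _ => ?_))
    rw [Finset.sum_eq_single i]
    · have h := hiso i i
      rw [if_pos rfl] at h
      calc (S i * ρ m * star (S i)) * (S i * z * star (S i))
          = S i * ρ m * (star (S i) * S i) * (z * star (S i)) := by noncomm_ring
        _ = S i * (ρ m * z) * star (S i) := by rw [h]; noncomm_ring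
    · intro j _ hji
      have h := hiso j i
      rw [if_neg hji] at h
      calc (S j * ρ m * star (S j)) * (S i * z * star (S i))
          = S j * ρ m * (star (S j) * S i) * (z * star (S i)) := by noncomm_ring
        _ = 0 := by rw [h]; noncomm_ring
    · exact fun h => absurd (Finset.mem_univ i) h
  -- conj of 1
  have hconj1 : (∑ i, S i * (1 : B) * star (S i)) = 1 := by
    simpa using hcuntz
  -- conj of cuntzProd
  have hconjP : ∀ (m l : ℕ),
      (∑ i, S i * cuntzProd ρ (l + 1) m * star (S i)) = cuntzProd ρ (l + 2) m := by
    intro m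
    induction m with
    | zero => intro l; rw [cuntzProd_zero, cuntzProd_zero]; exact hconj1
    | succ m ih =>
      intro l
      rw [cuntzProd_succ_left ρ (l + 1) m, cuntzProd_succ_left ρ (l + 2) m,
        show l + 1 + 1 = l + 2 from rfl, show l + 2 + 1 = l + 3 from rfl]
      have expand : ∀ i : Fin n,
          S i * ((1 - ρ (l + 1)) * cuntzProd ρ (l + 2) m) * star (S i)
            = S i * cuntzProd ρ (l + 2) m * star (S i)
              - S i * (ρ (l + 1) * cuntzProd ρ (l + 2) m) * star (S i) := by
        intro i; noncomm_ring
      rw [Finset.sum_congr rfl (fun i _ => expand i), Finset.sum_sub_distrib,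
        hconjρ (l + 1) (cuntzProd ρ (l + 2) m)]
      have h1 := ih (l + 1)
      rw [show l + 1 + 1 = l + 2 from rfl, show l + 1 + 2 = l + 3 from rfl] at h1
      rw [h1]
      noncomm_ring
  -- q = cuntzProd ρ 1 K * p
  have hq' : q = cuntzProd ρ 1 K * p := by
    have hfe : (fun k => 1 - ρ (k + 1)) = (fun k => 1 - ρ (1 + k)) := by
      funext k; rw [Nat.add_comm 1 k]
    rw [hq, cuntzProd, hfe]
  -- p commutes with cuntzProd ρ l m for any l m
  have hcommP : ∀ l m, Commute p (cuntzProd ρ l m) := by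
    intro l m
    refine Commute.list_prod_right _ _ (fun x hx => ?_)
    simp only [List.mem_map] at hx
    obtain ⟨k, _, rfl⟩ := hx
    exact (Commute.one_right p).sub_right (hcommρ (l + k))
  have hρ0 : ρ 0 = p := by
    rw [hρ]
    rw [Finset.sum_eq_single (fun i : Fin 0 => i.elim0)]
    · simp [hSw_nil]
    · intro f _ hf; exact absurd (funext fun i => i.elim0) hf
    · exact fun h => absurd (Finset.mem_univ _) h
  -- main claim
  have main : ∀ l, (∑ μ : Fin l → Fin n, Sw (List.ofFn μ) * q * star (Sw (List.ofFn μ)))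
      = ρ l * cuntzProd ρ (l + 1) K := by
    intro l
    induction l with
    | zero =>
      rw [Finset.sum_eq_single (fun i : Fin 0 => i.elim0)]
      · simp only [List.ofFn_zero, hSw_nil, one_mul, star_one, mul_one]
        rw [hq', hρ0, show (0 : ℕ) + 1 = 1 from rfl, (hcommP 1 K).eq]
      · intro f _ hf; exact absurd (funext fun i => i.elim0) hf
      · exact fun h => absurd (Finset.mem_univ _) h
    | succ l ih =>
      rw [hsumsucc q l, Finset.sum_congr rfl (fun i _ => by rw [ih]),
        hconjρ l (cuntzProd ρ (l + 1) K), hconjP K l]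
  -- tail products act as identity on p
  have htailp : ∀ m j, K < j → cuntzProd ρ j m * p = p := by
    intro m
    induction m with
    | zero => intro j _; rw [cuntzProd_zero, one_mul]
    | succ m ih =>
      intro j hj
      rw [cuntzProd_succ_left, mul_assoc, ih (j + 1) (by omega), sub_mul, one_mul,
        hρp0 j hj, sub_zero]
  -- telescoping function
  set F : ℕ → B := fun l => cuntzProd ρ l (K + 1 - l) with hF
  have hFstep : ∀ l, l ≤ K → F l = (1 - ρ l) * F (l + 1) := by
    intro l hl
    show cuntzProd ρ l (K + 1 - l) = (1 - ρ l) * cuntzProd ρ (l + 1) (K + 1 - (l + 1))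
    rw [show K + 1 - l = (K - l) + 1 by omega, show K + 1 - (l + 1) = K - l by omega,
      cuntzProd_succ_left]
  have hterm : ∀ l, l ≤ K → ρ l * cuntzProd ρ (l + 1) K * p = (F (l + 1) - F l) * p := by
    intro l hl
    have hsplit : cuntzProd ρ (l + 1) K
        = cuntzProd ρ (l + 1) (K - l) * cuntzProd ρ (K + 1) l := by
      conv_lhs => rw [show K = (K - l) + l by omega]
      rw [cuntzProd_add, show l + 1 + (K - l) = K + 1 by omega]
    have hFl1 : F (l + 1) = cuntzProd ρ (l + 1) (K - l) := by
      show cuntzProd ρ (l + 1) (K + 1 - (l + 1)) = _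
      congr 1
      omega
    calc ρ l * cuntzProd ρ (l + 1) K * p
        = ρ l * cuntzProd ρ (l + 1) (K - l) * (cuntzProd ρ (K + 1) l * p) := by
          rw [hsplit]; noncomm_ring
      _ = ρ l * cuntzProd ρ (l + 1) (K - l) * p := by rw [htailp l (K + 1) (by omega)]
      _ = ρ l * F (l + 1) * p := by rw [hFl1]
      _ = (F (l + 1) - (1 - ρ l) * F (l + 1)) * p := by noncomm_ring
      _ = (F (l + 1) - F l) * p := by rw [← hFstep l hl]
  calc (∑ l ∈ Finset.range (K + 1), ∑ μ : Fin l → Fin n,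
        Sw (List.ofFn μ) * q * star (Sw (List.ofFn μ))) * p
      = ∑ l ∈ Finset.range (K + 1), ρ l * cuntzProd ρ (l + 1) K * p := by
        rw [Finset.sum_mul]
        exact Finset.sum_congr rfl (fun l _ => by rw [main l])
    _ = ∑ l ∈ Finset.range (K + 1), (F (l + 1) - F l) * p := by
        exact Finset.sum_congr rfl
          (fun l hl => hterm l (Nat.lt_succ_iff.mp (Finset.mem_range.mp hl)))
    _ = (F (K + 1) - F 0) * p := by rw [← Finset.sum_mul, Finset.sum_range_sub]
    _ = p := by
        have hFK1 : F (K + 1) = 1 := by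
          show cuntzProd ρ (K + 1) (K + 1 - (K + 1)) = 1
          rw [Nat.sub_self, cuntzProd_zero]
        have hcF1 : Commute p (F 1) := hcommP 1 (K + 1 - 1)
        have hF0 : F 0 * p = 0 := by
          rw [hFstep 0 (by omega), hρ0, mul_assoc, ← hcF1.eq, ← mul_assoc, sub_mul,
            one_mul, hpp, sub_self, zero_mul]
        rw [hFK1, sub_mul, one_mul, hF0, sub_zero]
end

section
/- Let Γ be a topological abelian group, n ≥ 2, and ω₁,…,ωₙ ∈ Γ, and let i₀ be a fixed letter. If (μ_m) is a sequence of words such that for each m, μ_m's multiset of letters contains μ_{m−1}'s multiset of letters together with at least one additional occurrence of i₀, and ω_{μ_m} → γ₀ for some γ₀ ∈ Γ, then ω_{μ_m} − ω_{μ_{m−1}} − ω_{i₀} ∈ {ω_μ : μ a word (possibly empty)} for each m, and −ω_{i₀} ∈ closure({ω_μ : μ any word}). -/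
theorem stmt19 {Γ : Type*} [AddCommGroup Γ] [TopologicalSpace Γ] [IsTopologicalAddGroup Γ]
    [T2Space Γ] (n : ℕ) (hn : 2 ≤ n) (ω : Fin n → Γ) (i₀ : Fin n)
    (μ : ℕ → List (Fin n))
    (hmult : ∀ m : ℕ, (i₀ ::ₘ (↑(μ m) : Multiset (Fin n))) ≤ (↑(μ (m + 1)) : Multiset (Fin n)))
    (γ₀ : Γ)
    (htend : Filter.Tendsto (fun m => ((μ m).map ω).sum) Filter.atTop (nhds γ₀)) :
    (∀ m : ℕ, ((μ (m + 1)).map ω).sum - ((μ m).map ω).sum - ω i₀ ∈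
      {γ : Γ | ∃ ν : List (Fin n), (ν.map ω).sum = γ}) ∧
    -ω i₀ ∈ closure {γ : Γ | ∃ ν : List (Fin n), (ν.map ω).sum = γ} := by
  have hmem : ∀ m : ℕ, ((μ (m + 1)).map ω).sum - ((μ m).map ω).sum - ω i₀ ∈
      {γ : Γ | ∃ ν : List (Fin n), (ν.map ω).sum = γ} := by
    intro m
    obtain ⟨t, ht⟩ := Multiset.le_iff_exists_add.mp (hmult m)
    refine ⟨t.toList, ?_⟩
    have h1 : ((μ (m + 1)).map ω).sum = ((↑(μ (m + 1)) : Multiset (Fin n)).map ω).sum := by simp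
    have h2 : ((μ m).map ω).sum = ((↑(μ m) : Multiset (Fin n)).map ω).sum := by simp
    have h3 : (t.toList.map ω).sum = (t.map ω).sum := by
      conv_rhs => rw [← t.coe_toList, Multiset.map_coe, Multiset.sum_coe]
    rw [h1, h2, h3, ht]
    simp only [Multiset.map_add, Multiset.sum_add, Multiset.map_cons, Multiset.sum_cons]
    abel
  refine ⟨hmem, ?_⟩
  have htend' : Filter.Tendsto
      (fun m => ((μ (m + 1)).map ω).sum - ((μ m).map ω).sum - ω i₀)
      Filter.atTop (nhds (-ω i₀)) := by
    have h1 : Filter.Tendsto (fun m => ((μ (m + 1)).map ω).sum) Filter.atTop (nhds γ₀) :=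
      htend.comp (Filter.tendsto_add_atTop_nat 1)
    have := (h1.sub htend).sub (tendsto_const_nhds (x := ω i₀))
    simpa using this
  exact mem_closure_of_tendsto htend' (Filter.Eventually.of_forall hmem)
end
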